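/- arXiv:math/0510548 — 3 statements merged into one kernel-verified Lean document; each statement's English description precedes it below -/
import Mathlib

section
/- The set Sₙ = {(a₁,...,aₙ) ∈ ℝⁿ : xⁿ + a₁x^{n−1} + ⋯ + aₙ has n distinct real roots} is a semialgebraic subset of ℝⁿ: there exist polynomials F₂,...,Fₙ ∈ ℝ[a₁,...,aₙ] such that (a₁,...,aₙ) ∈ Sₙ if and only if F₂(a₁,...,aₙ) > 0, ..., Fₙ(a₁,...,aₙ) > 0. -/
open Polynomial Finset Matrix

namespace DRR


noncomputable def coefPoly (n : ℕ) (i : ℕ) : MvPolynomial (Fin n) ℝ :=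
  if h : i < n then MvPolynomial.X ⟨i, h⟩ else 0

noncomputable def P (n : ℕ) : ℕ → MvPolynomial (Fin n) ℝ
  | 0 => (n : MvPolynomial (Fin n) ℝ)
  | (k+1) => -(((k:ℕ)+1 : ℕ) : MvPolynomial (Fin n) ℝ) * coefPoly n k
      - ∑ i ∈ Finset.range k, coefPoly n i * P n (k - i)
  termination_by k => k
  decreasing_by exact Nat.lt_succ_of_le (Nat.sub_le k i)

lemma esymm_eq_zero_of_gt {n j : ℕ} (h : n < j) :
    MvPolynomial.esymm (Fin n) ℂ j = 0 := by
  rw [MvPolynomial.esymm, Finset.powersetCard_eq_empty.mpr (by simpa using h)]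
  simp

lemma ofReal_eval (n : ℕ) (a : Fin n → ℝ) (q : MvPolynomial (Fin n) ℝ) :
    ((MvPolynomial.eval a q : ℝ) : ℂ)
      = MvPolynomial.eval₂Hom Complex.ofRealHom (fun i => ((a i : ℝ) : ℂ)) q := by
  rw [show ((MvPolynomial.eval a q : ℝ) : ℂ)
      = Complex.ofRealHom (MvPolynomial.eval₂ (RingHom.id ℝ) a q) from rfl,
    MvPolynomial.eval₂_comp_left, RingHom.comp_id]
  rfl

lemma newton_eval {n : ℕ} (a : Fin n → ℝ) (z : Fin n → ℂ)
    (hcoef : ∀ (i : ℕ) (h : i < n),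
      ((a ⟨i, h⟩ : ℝ) : ℂ) = (-1)^(i+1) * MvPolynomial.eval z (MvPolynomial.esymm (Fin n) ℂ (i+1)))
    (k : ℕ) :
    ((MvPolynomial.eval a (P n k) : ℝ) : ℂ) = ∑ i, z i ^ k := by
  set φ : MvPolynomial (Fin n) ℝ →+* ℂ :=
    MvPolynomial.eval₂Hom Complex.ofRealHom (fun i => ((a i : ℝ) : ℂ)) with hφ
  have hφeq : ∀ q, ((MvPolynomial.eval a q : ℝ) : ℂ) = φ q := fun q => ofReal_eval n a q
  have hc : ∀ i : ℕ, φ (coefPoly n i)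
      = (-1)^(i+1) * MvPolynomial.eval z (MvPolynomial.esymm (Fin n) ℂ (i+1)) := by
    intro i
    by_cases h : i < n
    · rw [coefPoly, dif_pos h, ← hφeq, MvPolynomial.eval_X]; exact hcoef i h
    · rw [coefPoly, dif_neg h, map_zero, esymm_eq_zero_of_gt (by omega), map_zero, mul_zero]
  rw [hφeq]
  induction k using Nat.strong_induction_on with
  | _ k ih =>
    match k with
    | 0 => simp [P, φ]
    | (k+1) =>
      have hN := congrArg (MvPolynomial.eval z)
        (MvPolynomial.psum_eq_mul_esymm_sub_sum (Fin n) ℂ (k+1) (Nat.succ_pos k))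
      have hpsum : ∀ m, MvPolynomial.eval z (MvPolynomial.psum (Fin n) ℂ m) = ∑ i, z i ^ m := by
        intro m; simp [MvPolynomial.psum]
      simp only [_root_.map_sub, _root_.map_mul, _root_.map_pow, _root_.map_neg, _root_.map_one, _root_.map_natCast, _root_.map_sum, hpsum] at hN
      have hset : ((antidiagonal (k+1)).filter (fun a => a.1 ∈ Set.Ioo 0 (k+1)))
          = Finset.image (fun i => (i+1, k-i)) (Finset.range k) := by
        ext ⟨p, q⟩
        simp only [Finset.mem_filter, Finset.HasAntidiagonal.mem_antidiagonal, Set.mem_Ioo, Finset.mem_image,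
          Finset.mem_range, Prod.mk.injEq]
        constructor
        · rintro ⟨hpq, hp0, hpk⟩; exact ⟨p - 1, by omega, by omega, by omega⟩
        · rintro ⟨i, hi, rfl, rfl⟩; omega
      rw [hset, Finset.sum_image
        (by intro x _ y _ h; have := congrArg Prod.fst h; simp at this; omega)] at hN
      dsimp only at hN
      have hL : φ (P n (k+1)) = -(((k:ℂ)+1))
            * ((-1)^(k+1) * MvPolynomial.eval z (MvPolynomial.esymm (Fin n) ℂ (k+1)))
          - ∑ x ∈ Finset.range k,
            ((-1:ℂ)^(x+1) * MvPolynomial.eval z (MvPolynomial.esymm (Fin n) ℂ (x+1)))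
              * (∑ j, z j ^ (k - x)) := by
        rw [P, _root_.map_sub, _root_.map_mul, _root_.map_neg, _root_.map_natCast, hc, _root_.map_sum]
        push_cast
        congr 1
        apply Finset.sum_congr rfl
        intro i hi
        rw [_root_.map_mul, hc, ih (k-i) (Nat.lt_succ_of_le (Nat.sub_le k i))]
      rw [hL, hN]
      congr 1
      push_cast
      ring


/-- the generic monic polynomial -/
noncomputable def pp (n : ℕ) (a : Fin n → ℝ) : Polynomial ℝ :=
  (X : Polynomial ℝ) ^ n + ∑ i : Fin n, Polynomial.C (a i) * X ^ (n - 1 - (i : ℕ))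

lemma coeff_pp {n : ℕ} (a : Fin n → ℝ) (m : ℕ) (h : m < n) :
    (pp n a).coeff m = a ⟨n - 1 - m, by omega⟩ := by
  rw [pp, coeff_add, coeff_X_pow, if_neg (by omega), zero_add, finset_sum_coeff]
  rw [Finset.sum_eq_single (⟨n - 1 - m, by omega⟩ : Fin n)]
  · rw [coeff_C_mul, coeff_X_pow, if_pos (by simp only [Fin.val_mk]; omega), mul_one]
  · intro b _ hb
    rw [coeff_C_mul, coeff_X_pow, if_neg, mul_zero]
    intro hc
    have hb2 := b.isLt
    exact hb (Fin.ext (by simp only [Fin.val_mk]; omega))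
  · intro hmem; exact absurd (Finset.mem_univ _) hmem

lemma degree_sum_lt {n : ℕ} (hn : 0 < n) (a : Fin n → ℝ) :
    (∑ i : Fin n, Polynomial.C (a i) * X ^ (n - 1 - (i : ℕ))).degree < (n : WithBot ℕ) := by
  apply lt_of_le_of_lt (Polynomial.degree_sum_le _ _)
  rw [Finset.sup_lt_iff (by exact_mod_cast WithBot.bot_lt_coe n)]
  intro i _
  calc (Polynomial.C (a i) * X ^ (n - 1 - (i : ℕ))).degree ≤ ((n - 1 - (i : ℕ) : ℕ) : WithBot ℕ) :=
        Polynomial.degree_C_mul_X_pow_le _ _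
    _ < (n : WithBot ℕ) := by exact_mod_cast (show n - 1 - (i:ℕ) < n by omega)

lemma monic_pp {n : ℕ} (hn : 0 < n) (a : Fin n → ℝ) : (pp n a).Monic :=
  Polynomial.monic_X_pow_add (by simpa using degree_sum_lt hn a)

lemma degree_pp {n : ℕ} (hn : 0 < n) (a : Fin n → ℝ) : (pp n a).degree = n := by
  rw [pp, Polynomial.degree_add_eq_left_of_degree_lt, degree_X_pow]
  rw [degree_X_pow]
  exact degree_sum_lt hn a

lemma natDegree_pp {n : ℕ} (hn : 0 < n) (a : Fin n → ℝ) : (pp n a).natDegree = n :=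
  natDegree_eq_of_degree_eq_some (degree_pp hn a)

/-- Vieta: if the complexification factors as `∏ (X - z i)` then the coefficients are
signed elementary symmetric functions of `z`. -/
lemma hcoef_of_prod {n : ℕ} (a : Fin n → ℝ) (z : Fin n → ℂ)
    (h : (pp n a).map (algebraMap ℝ ℂ) = ∏ i : Fin n, (X - Polynomial.C (z i))) :
    ∀ (i : ℕ) (hi : i < n),
      ((a ⟨i, hi⟩ : ℝ) : ℂ)
        = (-1)^(i+1) * MvPolynomial.eval z (MvPolynomial.esymm (Fin n) ℂ (i+1)) := by
  intro i hi
  have hco := congrArg (fun q => Polynomial.coeff q (n - 1 - i)) h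
  simp only [Polynomial.coeff_map] at hco
  rw [coeff_pp a (n-1-i) (by omega)] at hco
  have hL : ((a ⟨i, hi⟩ : ℝ) : ℂ)
      = (∏ i : Fin n, ((X : Polynomial ℂ) - Polynomial.C (z i))).coeff (n - 1 - i) := by
    rw [← hco]; congr 2; exact Fin.ext (by simp only [Fin.val_mk]; omega)
  rw [hL]
  have hprod : (∏ i : Fin n, ((X : Polynomial ℂ) - Polynomial.C (z i)))
      = ((Finset.univ.val.map z).map (fun r => (X : Polynomial ℂ) - Polynomial.C r)).prod := by
    rw [Multiset.map_map, Finset.prod_eq_multiset_prod]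
    rfl
  have hcard : Multiset.card (Finset.univ.val.map z) = n := by simp
  rw [hprod, Multiset.prod_X_sub_C_coeff _ (le_of_lt (by rw [hcard]; omega))]
  rw [hcard]
  have h1 : n - (n - 1 - i) = i + 1 := by omega
  rw [h1]
  congr 1
  rw [← MvPolynomial.aeval_esymm_eq_multiset_esymm (Fin n) ℂ (i+1) z]
  rw [MvPolynomial.aeval_def, Algebra.algebraMap_self]
  rfl


lemma posDef_one_dim {M : Matrix (Fin 1) (Fin 1) ℝ} (h : 0 < M 0 0) : M.PosDef := by
  refine Matrix.PosDef.of_dotProduct_mulVec_pos ?_ ?_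
  · ext i j
    fin_cases i; fin_cases j
    simp [Matrix.conjTranspose_apply]
  · intro x hx
    have hx0 : x 0 ≠ 0 := fun h0 => hx (funext fun i => by fin_cases i; exact h0)
    have hq : star x ⬝ᵥ M *ᵥ x = M 0 0 * (x 0 * x 0) := by
      simp [dotProduct, Matrix.mulVec]
      ring
    rw [hq]
    exact mul_pos h (mul_self_pos.mpr hx0)

lemma posDef_of_posSemidef_det_ne_zero {m : ℕ} {M : Matrix (Fin m) (Fin m) ℝ}
    (hsd : M.PosSemidef) (hdet : M.det ≠ 0) : M.PosDef := by
  refine Matrix.PosDef.of_dotProduct_mulVec_pos hsd.1 fun x hx => lt_of_le_of_ne (hsd.dotProduct_mulVec_nonneg x) fun heq => hx ?_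
  have hMx : M *ᵥ x = 0 := (hsd.dotProduct_mulVec_zero_iff x).mp heq.symm
  calc x = (M⁻¹ * M) *ᵥ x := by
        rw [Matrix.nonsing_inv_mul M (isUnit_iff_ne_zero.mpr hdet), Matrix.one_mulVec]
    _ = M⁻¹ *ᵥ (M *ᵥ x) := by rw [Matrix.mulVec_mulVec]
    _ = 0 := by rw [hMx, Matrix.mulVec_zero]

/-- Sylvester's criterion for real symmetric matrices. -/
lemma sylvester : ∀ (m : ℕ) (M : Matrix (Fin m) (Fin m) ℝ), M.IsHermitian →
    (∀ (k : ℕ) (hk : k < m),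
      0 < (M.submatrix (Fin.castLE hk) (Fin.castLE hk)).det) → M.PosDef := by
  intro m
  induction m with
  | zero =>
    intro M hM _
    exact ⟨hM, fun x hx => absurd (Subsingleton.elim x 0) hx⟩
  | succ m ih =>
    intro M hM hminor
    have hdetM : 0 < M.det := by
      have h1 := hminor m (Nat.lt_succ_self m)
      have hsub : M.submatrix (Fin.castLE (Nat.lt_succ_self m)) (Fin.castLE (Nat.lt_succ_self m))
          = M := by ext i j; simp [Fin.castLE]
      rwa [hsub] at h1
    set A : Matrix (Fin m) (Fin m) ℝ :=
      M.submatrix (Fin.castLE (Nat.le_succ m)) (Fin.castLE (Nat.le_succ m)) with hAdef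
    have hA : A.PosDef := by
      apply ih A (hM.submatrix _)
      intro k hk
      have h1 := hminor k (hk.trans (Nat.lt_succ_self m))
      have : A.submatrix (Fin.castLE hk) (Fin.castLE hk)
          = M.submatrix (Fin.castLE (hk.trans (Nat.lt_succ_self m)))
            (Fin.castLE (hk.trans (Nat.lt_succ_self m))) := by
        ext i j; rfl
      rwa [this]
    haveI : Invertible A := A.invertibleOfIsUnitDet (isUnit_iff_ne_zero.mpr (ne_of_gt hA.det_pos))
    have hMsymm : ∀ i j, M i j = M j i := by
      intro i j
      have := congrFun (congrFun hM i) j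
      simpa [Matrix.conjTranspose_apply] using this.symm
    set B : Matrix (Fin m) (Fin 1) ℝ :=
      fun k _ => M (Fin.castLE (Nat.le_succ m) k) (Fin.last m) with hBdef
    set D : Matrix (Fin 1) (Fin 1) ℝ := fun _ _ => M (Fin.last m) (Fin.last m) with hDdef
    have hblock : M.submatrix finSumFinEquiv finSumFinEquiv = Matrix.fromBlocks A B Bᴴ D := by
      ext i j
      cases i with
      | inl k =>
        cases j with
        | inl l => rfl
        | inr l =>
          show M _ _ = B k l
          rw [hBdef]
          congr 1 <;> exact Fin.ext (by simp [finSumFinEquiv] <;> omega)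
      | inr k =>
        cases j with
        | inl l =>
          show M _ _ = Bᴴ k l
          rw [Matrix.conjTranspose_apply, hBdef]
          rw [show star (M (Fin.castLE (Nat.le_succ m) l) (Fin.last m))
              = M (Fin.castLE (Nat.le_succ m) l) (Fin.last m) from rfl, hMsymm]
          congr 1 <;> exact Fin.ext (by simp [finSumFinEquiv] <;> omega)
        | inr l =>
          show M _ _ = D k l
          rw [hDdef]
          congr 1 <;> exact Fin.ext (by simp [finSumFinEquiv] <;> omega)
    have hdetB : M.det = A.det * (D - Bᴴ * A⁻¹ * B).det := by
      rw [← Matrix.det_submatrix_equiv_self finSumFinEquiv M, hblock,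
        Matrix.det_fromBlocks₁₁, Matrix.invOf_eq_nonsing_inv]
    have hS : (D - Bᴴ * A⁻¹ * B).PosDef := by
      apply posDef_one_dim
      have hdS : 0 < (D - Bᴴ * A⁻¹ * B).det := by
        have := hA.det_pos
        nlinarith [hdetM, hdetB]
      rwa [Matrix.det_fin_one] at hdS
    have hfrom : (Matrix.fromBlocks A B Bᴴ D).PosSemidef :=
      (Matrix.PosDef.fromBlocks₁₁ B D hA).mpr hS.posSemidef
    rw [← hblock] at hfrom
    exact posDef_of_posSemidef_det_ne_zero
      ((Matrix.posSemidef_submatrix_equiv finSumFinEquiv).mp hfrom) (ne_of_gt hdetM)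


/-- polynomial with coefficient vector `x` -/
noncomputable def qq (m : ℕ) (x : Fin m → ℝ) : Polynomial ℝ :=
  ∑ k : Fin m, Polynomial.C (x k) * X ^ (k : ℕ)

lemma qq_coeff {m : ℕ} (x : Fin m → ℝ) (k : Fin m) : (qq m x).coeff k = x k := by
  rw [qq, finset_sum_coeff, Finset.sum_eq_single k]
  · rw [coeff_C_mul, coeff_X_pow, if_pos rfl, mul_one]
  · intro b _ hb
    rw [coeff_C_mul, coeff_X_pow, if_neg (fun hc => hb (Fin.ext (by exact_mod_cast hc.symm))),
      mul_zero]
  · intro hmem; exact absurd (Finset.mem_univ _) hmem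

lemma qq_eval {m : ℕ} (x : Fin m → ℝ) (t : ℝ) :
    (qq m x).eval t = ∑ k : Fin m, x k * t ^ (k : ℕ) := by
  rw [qq]
  simp [eval_finset_sum]

lemma qq_degree_lt {m : ℕ} (x : Fin m → ℝ) : (qq m x).degree < (m : WithBot ℕ) := by
  apply lt_of_le_of_lt (Polynomial.degree_sum_le _ _)
  rw [Finset.sup_lt_iff (by exact_mod_cast WithBot.bot_lt_coe m)]
  intro i _
  calc (Polynomial.C (x i) * X ^ (i : ℕ)).degree ≤ ((i : ℕ) : WithBot ℕ) :=
        Polynomial.degree_C_mul_X_pow_le _ _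
    _ < (m : WithBot ℕ) := by exact_mod_cast i.isLt

lemma qq_natDegree_lt {m : ℕ} (hm : 0 < m) (x : Fin m → ℝ) : (qq m x).natDegree < m := by
  by_cases h0 : qq m x = 0
  · rw [h0]; simpa using hm
  · rw [Polynomial.natDegree_lt_iff_degree_lt h0]
    exact qq_degree_lt x

lemma vanish_eq_zero {n m : ℕ} (hmn : m ≤ n) (r : Fin n → ℝ) (hinj : Function.Injective r)
    (x : Fin m → ℝ) (hvan : ∀ i : Fin n, ∑ k : Fin m, x k * r i ^ (k:ℕ) = 0) : x = 0 := by
  rcases Nat.eq_zero_or_pos m with hm | hm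
  · subst hm; exact funext fun k => k.elim0
  have hq : qq m x = 0 := by
    apply Polynomial.eq_zero_of_natDegree_lt_card_of_eval_eq_zero (qq m x) hinj
    · intro i; rw [qq_eval]; exact hvan i
    · rw [Fintype.card_fin]
      exact lt_of_lt_of_le (qq_natDegree_lt hm x) hmn
  funext k
  rw [← qq_coeff x k, hq]
  simp

lemma posDef_WWt {n m : ℕ} (hmn : m ≤ n) (r : Fin n → ℝ) (hinj : Function.Injective r) :
    Matrix.PosDef ((Matrix.of fun (k : Fin m) (i : Fin n) => r i ^ (k:ℕ)) *
      (Matrix.of fun (k : Fin m) (i : Fin n) => r i ^ (k:ℕ))ᵀ) := by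
  set W : Matrix (Fin m) (Fin n) ℝ := Matrix.of fun k i => r i ^ (k:ℕ) with hW
  have hsd : (W * Wᵀ).PosSemidef := by
    have := Matrix.posSemidef_self_mul_conjTranspose W
    simpa [Matrix.conjTranspose_eq_transpose_of_trivial] using this
  refine Matrix.PosDef.of_dotProduct_mulVec_pos hsd.1 fun x hx => ?_
  have hy : star x ⬝ᵥ (W * Wᵀ) *ᵥ x = (Wᵀ *ᵥ x) ⬝ᵥ (Wᵀ *ᵥ x) := by
    rw [star_trivial, ← Matrix.mulVec_mulVec, dotProduct_mulVec, Matrix.mulVec_transpose]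
  rw [hy]
  have hyne : Wᵀ *ᵥ x ≠ 0 := by
    intro h0
    apply hx
    apply vanish_eq_zero hmn r hinj x
    intro i
    have hyi := congrFun h0 i
    simpa [Matrix.mulVec, dotProduct, W, mul_comm, Matrix.transpose_apply] using hyi
  have hnn : 0 ≤ (Wᵀ *ᵥ x) ⬝ᵥ (Wᵀ *ᵥ x) :=
    Finset.sum_nonneg fun i _ => mul_self_nonneg _
  exact lt_of_le_of_ne hnn (fun h => hyne (dotProduct_self_eq_zero.mp h.symm))


/-- the minor polynomials -/
noncomputable def Fpoly (n : ℕ) (j : Fin (n-1)) : MvPolynomial (Fin n) ℝ :=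
  (Matrix.of fun k l : Fin ((j:ℕ)+2) => P n ((k:ℕ)+(l:ℕ))).det

lemma eval_Fpoly {n : ℕ} (a : Fin n → ℝ) (j : Fin (n-1)) :
    MvPolynomial.eval a (Fpoly n j)
      = (Matrix.of fun k l : Fin ((j:ℕ)+2) =>
          MvPolynomial.eval a (P n ((k:ℕ)+(l:ℕ)))).det := by
  rw [Fpoly, RingHom.map_det]
  rfl

/-- complexify a real factorization -/
lemma map_fact {n : ℕ} (a : Fin n → ℝ) (r : Fin n → ℝ)
    (hfact : pp n a = ∏ i : Fin n, (X - Polynomial.C (r i))) :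
    (pp n a).map (algebraMap ℝ ℂ) = ∏ i : Fin n, (X - Polynomial.C ((r i : ℝ) : ℂ)) := by
  rw [hfact, Polynomial.map_prod]
  apply Finset.prod_congr rfl
  intro i _
  simp

lemma hP_real {n : ℕ} (a : Fin n → ℝ) (r : Fin n → ℝ)
    (hfact : pp n a = ∏ i : Fin n, (X - Polynomial.C (r i))) (m : ℕ) :
    MvPolynomial.eval a (P n m) = ∑ i, r i ^ m := by
  have h := newton_eval a (fun i => ((r i : ℝ) : ℂ)) (hcoef_of_prod a _ (map_fact a r hfact)) m
  push_cast at h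
  exact_mod_cast h

lemma forward {n : ℕ} (a : Fin n → ℝ) (r : Fin n → ℝ) (hinj : Function.Injective r)
    (hfact : pp n a = ∏ i : Fin n, (X - Polynomial.C (r i))) (j : Fin (n-1)) :
    0 < MvPolynomial.eval a (Fpoly n j) := by
  have hmn : (j:ℕ) + 2 ≤ n := by have := j.isLt; omega
  rw [eval_Fpoly]
  have hHM : (Matrix.of fun k l : Fin ((j:ℕ)+2) => MvPolynomial.eval a (P n ((k:ℕ)+(l:ℕ))))
      = (Matrix.of fun (k : Fin ((j:ℕ)+2)) (i : Fin n) => r i ^ (k:ℕ)) *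
        (Matrix.of fun (k : Fin ((j:ℕ)+2)) (i : Fin n) => r i ^ (k:ℕ))ᵀ := by
    ext k l
    rw [Matrix.mul_apply]
    simp only [Matrix.of_apply, Matrix.transpose_apply, hP_real a r hfact]
    apply Finset.sum_congr rfl
    intro i _
    rw [pow_add]
  rw [hHM]
  exact (posDef_WWt hmn r hinj).det_pos


/-- extraction of complex roots as a function -/
lemma exists_roots_fn {n : ℕ} (hn : 0 < n) (a : Fin n → ℝ) :
    ∃ z : Fin n → ℂ,
      (pp n a).map (algebraMap ℝ ℂ) = ∏ i : Fin n, (X - Polynomial.C (z i))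
      ∧ Multiset.map z Finset.univ.val = ((pp n a).map (algebraMap ℝ ℂ)).roots := by
  set pC := (pp n a).map (algebraMap ℝ ℂ) with hpC
  have hmonic : pC.Monic := (monic_pp hn a).map _
  have hsplit : pC.Splits := IsAlgClosed.splits pC
  have hdeg : pC.natDegree = n := by
    rw [hpC, (monic_pp hn a).natDegree_map, natDegree_pp hn a]
  have hcard : Multiset.card pC.roots = n := by
    rw [(Polynomial.splits_iff_card_roots).mp hsplit, hdeg]
  have hlen : pC.roots.toList.length = n := by
    rw [Multiset.length_toList, hcard]
  set z : Fin n → ℂ := fun i => pC.roots.toList.get (Fin.cast hlen.symm i) with hzdef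
  have hmap : Multiset.map z Finset.univ.val = pC.roots := by
    have h2 : Multiset.map z Finset.univ.val = ((List.finRange n).map z : Multiset ℂ) := by
      rw [Fin.univ_def]
      rfl
    rw [h2, ← List.ofFn_eq_map]
    have h3 : List.ofFn z = pC.roots.toList := by
      apply List.ext_get
      · rw [List.length_ofFn, hlen]
      · intro i h1' h2'
        rw [List.get_ofFn]
        rfl
    rw [h3, Multiset.coe_toList]
  refine ⟨z, ?_, hmap⟩
  have hprod := hsplit.eq_prod_roots_of_monic hmonic
  rw [Finset.prod_eq_multiset_prod,
    show (Multiset.map (fun i => X - Polynomial.C (z i)) Finset.univ.val)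
      = (Multiset.map (fun w => X - Polynomial.C w) (Multiset.map z Finset.univ.val)) by
        rw [Multiset.map_map]; rfl,
    hmap, ← hprod]


/-- conjugation stability of the complex roots -/
lemma roots_conj_stable {n : ℕ} (a : Fin n → ℝ) :
    ((pp n a).map (algebraMap ℝ ℂ)).roots.map (starRingEnd ℂ)
      = ((pp n a).map (algebraMap ℝ ℂ)).roots := by
  set pC := (pp n a).map (algebraMap ℝ ℂ) with hpC
  have hself : pC.map (starRingEnd ℂ) = pC := by
    rw [hpC, Polynomial.map_map]
    congr 1
    ext x
    simp [Complex.conj_ofReal]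
  have hsplit : pC.Splits := IsAlgClosed.splits pC
  have := hsplit.roots_map (starRingEnd ℂ)
  rw [hself] at this
  exact this.symm

/-- the complex quadratic-form computation -/
lemma quad_form_complex {n : ℕ} (H : Matrix (Fin n) (Fin n) ℝ) (z : Fin n → ℂ)
    (hH : ∀ k l : Fin n, ((H k l : ℝ) : ℂ) = ∑ i, z i ^ ((k:ℕ) + (l:ℕ)))
    (x : Fin n → ℝ) (Q : Polynomial ℂ)
    (hQ : ∀ t : ℂ, Q.eval t = ∑ k : Fin n, ((x k : ℝ) : ℂ) * t ^ (k:ℕ)) :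
    ((x ⬝ᵥ H *ᵥ x : ℝ) : ℂ) = ∑ i, (Q.eval (z i))^2 := by
  have expand : (x ⬝ᵥ H *ᵥ x : ℝ) = ∑ k : Fin n, ∑ l : Fin n, x k * H k l * x l := by
    simp [dotProduct, Matrix.mulVec, Finset.mul_sum, mul_assoc]
  rw [expand]
  push_cast
  have : ∀ i : Fin n, (Q.eval (z i))^2
      = ∑ k : Fin n, ∑ l : Fin n, ((x k : ℝ):ℂ) * ((x l : ℝ):ℂ) * z i ^ ((k:ℕ)+(l:ℕ)) := by
    intro i
    rw [sq, hQ, Finset.sum_mul_sum]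
    apply Finset.sum_congr rfl; intro k _
    apply Finset.sum_congr rfl; intro l _
    rw [pow_add]; ring
  have hR : ∑ i, (Q.eval (z i))^2
      = ∑ k : Fin n, ∑ l : Fin n, (((x k : ℝ):ℂ) * ((x l : ℝ):ℂ)) * ∑ i, z i ^ ((k:ℕ)+(l:ℕ)) := by
    rw [Finset.sum_congr rfl fun i _ => this i, Finset.sum_comm]
    apply Finset.sum_congr rfl; intro k _
    rw [Finset.sum_comm]
    apply Finset.sum_congr rfl; intro l _
    rw [Finset.mul_sum]
  rw [hR]
  apply Finset.sum_congr rfl; intro k _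
  apply Finset.sum_congr rfl; intro l _
  rw [← hH]
  push_cast
  ring

/-- the real quadratic-form computation -/
lemma quad_form_real {n : ℕ} (H : Matrix (Fin n) (Fin n) ℝ) (t : Fin n → ℝ)
    (hH : ∀ k l : Fin n, H k l = ∑ i, t i ^ ((k:ℕ) + (l:ℕ))) (x : Fin n → ℝ) :
    x ⬝ᵥ H *ᵥ x = ∑ i, (∑ k : Fin n, x k * t i ^ (k:ℕ))^2 := by
  have expand : (x ⬝ᵥ H *ᵥ x : ℝ) = ∑ k : Fin n, ∑ l : Fin n, x k * H k l * x l := by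
    simp [dotProduct, Matrix.mulVec, Finset.mul_sum, mul_assoc]
  rw [expand]
  have : ∀ i : Fin n, (∑ k : Fin n, x k * t i ^ (k:ℕ))^2
      = ∑ k : Fin n, ∑ l : Fin n, x k * x l * t i ^ ((k:ℕ)+(l:ℕ)) := by
    intro i
    rw [sq, Finset.sum_mul_sum]
    apply Finset.sum_congr rfl; intro k _
    apply Finset.sum_congr rfl; intro l _
    rw [pow_add]; ring
  have hR : ∑ i, (∑ k : Fin n, x k * t i ^ (k:ℕ))^2
      = ∑ k : Fin n, ∑ l : Fin n, (x k * x l) * ∑ i, t i ^ ((k:ℕ)+(l:ℕ)) := by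
    rw [Finset.sum_congr rfl fun i _ => this i, Finset.sum_comm]
    apply Finset.sum_congr rfl; intro k _
    rw [Finset.sum_comm]
    apply Finset.sum_congr rfl; intro l _
    rw [Finset.mul_sum]
  rw [hR]
  apply Finset.sum_congr rfl; intro k _
  apply Finset.sum_congr rfl; intro l _
  rw [← hH]
  ring


lemma all_real_of_posDef {n : ℕ} (a : Fin n → ℝ) (z : Fin n → ℂ)
    (hmap : Multiset.map z Finset.univ.val = ((pp n a).map (algebraMap ℝ ℂ)).roots)
    (H : Matrix (Fin n) (Fin n) ℝ)
    (hs : ∀ k l : Fin n, ((H k l : ℝ) : ℂ) = ∑ i, z i ^ ((k:ℕ) + (l:ℕ)))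
    (hpd : H.PosDef) : ∀ i, (z i).im = 0 := by
  intro i0
  by_contra him
  set pC := (pp n a).map (algebraMap ℝ ℂ) with hpC
  set w := z i0 with hw
  set T := pC.roots.toFinset with hT
  have hTconj : ∀ u ∈ T, (starRingEnd ℂ) u ∈ T := by
    intro u hu
    rw [hT, Multiset.mem_toFinset] at hu ⊢
    rw [← roots_conj_stable a]
    exact Multiset.mem_map_of_mem _ hu
  have hzT : ∀ i, z i ∈ T := by
    intro i
    rw [hT, Multiset.mem_toFinset, ← hmap]
    exact Multiset.mem_map_of_mem z (by simp)
  have hwT : w ∈ T := hzT i0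
  have hwne : (starRingEnd ℂ) w ≠ w := fun h => him (Complex.conj_eq_iff_im.mp h)
  set vv : ℂ → ℂ := fun u =>
    if u = w then Complex.I else if u = (starRingEnd ℂ) w then -Complex.I else 0 with hvv
  set Q : Polynomial ℂ := Lagrange.interpolate T id vv with hQdef
  have hinj : Set.InjOn id (T : Set ℂ) := Set.injOn_id _
  have hdegQ : Q.degree < T.card := Lagrange.degree_interpolate_lt _ hinj
  have hQnode : ∀ u ∈ T, Q.eval u = vv u := fun u hu =>
    Lagrange.eval_interpolate_at_node vv hinj hu
  have hTcard : T.card ≤ n := by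
    have h1 : T.card ≤ Multiset.card pC.roots := Multiset.toFinset_card_le _
    have h2 : Multiset.card pC.roots = n := by rw [← hmap]; simp
    omega
  have hconjeval : ∀ u, (Q.map (starRingEnd ℂ)).eval u = (starRingEnd ℂ) (Q.eval ((starRingEnd ℂ) u)) := by
    intro u
    rw [Polynomial.eval_map,
      show Q.eval ((starRingEnd ℂ) u) = Polynomial.eval₂ (RingHom.id ℂ) ((starRingEnd ℂ) u) Q from rfl,
      Polynomial.hom_eval₂]
    simp
  have hmapQ : Q.map (starRingEnd ℂ) = Q := by
    rw [hQdef]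
    apply (Lagrange.eq_interpolate_of_eval_eq vv hinj ?_ ?_)
    · rw [Polynomial.degree_map_eq_of_injective (starRingEnd ℂ).injective]
      exact hdegQ
    · intro u hu
      rw [show (id u : ℂ) = u from rfl, hconjeval, hQnode _ (hTconj u hu)]
      by_cases h2 : u = w
      · subst h2
        rw [hvv]
        simp only [if_neg hwne, if_pos rfl, if_pos rfl]
        simp
      · by_cases h3 : u = (starRingEnd ℂ) w
        · subst h3
          rw [hvv]
          simp only [Complex.conj_conj, if_pos rfl, if_neg h2]
          simp [if_pos rfl]
        · have h4 : (starRingEnd ℂ) u ≠ w := by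
            intro hc; apply h3; rw [← hc]; simp
          have h5 : (starRingEnd ℂ) u ≠ (starRingEnd ℂ) w := fun hc => h2 ((starRingEnd ℂ).injective hc)
          rw [hvv]
          simp only [if_neg h2, if_neg h3, if_neg h4, if_neg h5]
          simp
  have hco : ∀ k : ℕ, (((Q.coeff k).re : ℝ) : ℂ) = Q.coeff k := by
    intro k
    have h1 := congrArg (fun q => Polynomial.coeff q k) hmapQ
    simp only [Polynomial.coeff_map] at h1
    exact Complex.conj_eq_iff_re.mp h1
  have hQw : Q.eval w = Complex.I := by
    rw [hQnode _ hwT, hvv]; simp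
  have hQ0 : Q ≠ 0 := by
    intro h0; rw [h0] at hQw; simp at hQw; exact Complex.I_ne_zero hQw.symm
  have hdegn : Q.natDegree < n := by
    rw [Polynomial.natDegree_lt_iff_degree_lt hQ0]
    exact lt_of_lt_of_le hdegQ (by exact_mod_cast hTcard)
  set x : Fin n → ℝ := fun k => (Q.coeff k).re with hx
  have hQeval : ∀ t : ℂ, Q.eval t = ∑ k : Fin n, ((x k : ℝ) : ℂ) * t ^ (k:ℕ) := by
    intro t
    rw [Polynomial.eval_eq_sum_range' hdegn t,
      ← Fin.sum_univ_eq_sum_range (fun k => Q.coeff k * t ^ k) n]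
    exact Finset.sum_congr rfl fun k _ => by rw [hco]
  have hxne : x ≠ 0 := by
    intro h0
    apply hQ0
    ext k
    by_cases hk : k < n
    · rw [← hco k, show ((Q.coeff k).re : ℝ) = x ⟨k, hk⟩ from rfl, h0]
      simp
    · rw [Polynomial.coeff_eq_zero_of_natDegree_lt (by omega)]
      simp
  have hquad := quad_form_complex H z hs x Q hQeval
  set u : Fin n → ℝ := fun i => if z i = w ∨ z i = (starRingEnd ℂ) w then (-1:ℝ) else 0 with hu
  have hvals : ∀ i, (Q.eval (z i))^2 = ((u i : ℝ) : ℂ) := by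
    intro i
    rw [hQnode _ (hzT i), hvv, hu]
    by_cases h2 : z i = w
    · simp only [if_pos h2, if_pos (Or.inl h2)]
      simp [Complex.I_sq]
    · by_cases h3 : z i = (starRingEnd ℂ) w
      · simp only [if_neg h2, if_pos h3, if_pos (Or.inr h3)]
        simp [Complex.I_sq]
      · simp only [if_neg h2, if_neg h3]
        rw [if_neg (by tauto)]
        simp
  rw [Finset.sum_congr rfl fun i _ => hvals i] at hquad
  have hback : (x ⬝ᵥ H *ᵥ x : ℝ) = ∑ i, u i := by
    have hsum : ((∑ i, u i : ℝ) : ℂ) = ∑ i, ((u i : ℝ) : ℂ) := by push_cast; ring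
    exact_mod_cast hquad.trans hsum.symm
  have hpos : 0 < (x ⬝ᵥ H *ᵥ x : ℝ) := by
    have := hpd.dotProduct_mulVec_pos hxne
    rwa [star_trivial] at this
  have hneg : ∑ i, u i ≤ 0 := by
    apply Finset.sum_nonpos
    intro i
    rw [hu]
    by_cases h : z i = w ∨ z i = (starRingEnd ℂ) w <;> simp [h]
  linarith


lemma inj_of_posDef {n : ℕ} (t : Fin n → ℝ) (H : Matrix (Fin n) (Fin n) ℝ)
    (hH : ∀ k l : Fin n, H k l = ∑ i, t i ^ ((k:ℕ) + (l:ℕ)))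
    (hpd : H.PosDef) : Function.Injective t := by
  intro i j hij
  by_contra hne
  set S : Finset ℝ := Finset.image t Finset.univ with hS
  have hScard : S.card < n := by
    have h1 : S = Finset.image t (Finset.univ.erase j) := by
      apply Finset.Subset.antisymm
      · intro u hu
        rw [hS, Finset.mem_image] at hu
        obtain ⟨i', _, rfl⟩ := hu
        by_cases hj : i' = j
        · subst hj
          exact Finset.mem_image.mpr ⟨i, Finset.mem_erase.mpr ⟨hne, Finset.mem_univ i⟩, hij⟩
        · exact Finset.mem_image.mpr ⟨i', Finset.mem_erase.mpr ⟨hj, Finset.mem_univ i'⟩, rfl⟩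
      · intro u hu
        rw [Finset.mem_image] at hu
        obtain ⟨i', _, rfl⟩ := hu
        exact Finset.mem_image.mpr ⟨i', Finset.mem_univ i', rfl⟩
    calc S.card ≤ (Finset.univ.erase j).card := h1 ▸ Finset.card_image_le
      _ < Finset.univ.card := Finset.card_erase_lt_of_mem (Finset.mem_univ j)
      _ = n := by simp
  set q : Polynomial ℝ := ∏ u ∈ S, (X - Polynomial.C u) with hq
  have hmono : q.Monic := monic_prod_of_monic _ _ fun u _ => monic_X_sub_C u
  have hqdeg : q.natDegree = S.card := by
    rw [hq, Polynomial.natDegree_prod_of_monic _ _ fun u _ => monic_X_sub_C u]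
    simp
  have hqdegn : q.natDegree < n := by omega
  set x : Fin n → ℝ := fun k => q.coeff k with hx
  have hxne : x ≠ 0 := by
    intro h0
    have h1 : q.coeff q.natDegree = 1 := hmono.coeff_natDegree
    have h2 : x ⟨q.natDegree, hqdegn⟩ = 1 := h1
    rw [h0] at h2
    simp at h2
  have heval : ∀ i' : Fin n, q.eval (t i') = 0 := by
    intro i'
    rw [hq, Polynomial.eval_prod]
    apply Finset.prod_eq_zero (Finset.mem_image.mpr ⟨i', Finset.mem_univ i', rfl⟩)
    simp
  have hquad := quad_form_real H t hH x
  have hzero : ∀ i' : Fin n, ∑ k : Fin n, x k * t i' ^ (k:ℕ) = 0 := by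
    intro i'
    rw [← heval i', Polynomial.eval_eq_sum_range' hqdegn,
      ← Fin.sum_univ_eq_sum_range (fun k => q.coeff k * t i' ^ k) n]
  rw [Finset.sum_congr rfl fun i' _ => by rw [hzero i']] at hquad
  simp only [ne_eq, OfNat.ofNat_ne_zero, not_false_eq_true, zero_pow, Finset.sum_const_zero] at hquad
  have hpos := hpd.dotProduct_mulVec_pos hxne
  rw [star_trivial, hquad] at hpos
  exact lt_irrefl 0 hpos


lemma backward {n : ℕ} (hn : 2 ≤ n) (a : Fin n → ℝ)
    (hpos : ∀ j : Fin (n-1), 0 < MvPolynomial.eval a (Fpoly n j)) :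
    ∃ r : Fin n → ℝ, Function.Injective r ∧ pp n a = ∏ i : Fin n, (X - Polynomial.C (r i)) := by
  set H : Matrix (Fin n) (Fin n) ℝ :=
    Matrix.of fun k l : Fin n => MvPolynomial.eval a (P n ((k:ℕ)+(l:ℕ))) with hH
  have hherm : H.IsHermitian := by
    ext k l
    simp only [Matrix.conjTranspose_apply, hH, Matrix.of_apply, star_trivial]
    rw [Nat.add_comm]
  have hminor : ∀ (k : ℕ) (hk : k < n),
      0 < (H.submatrix (Fin.castLE hk) (Fin.castLE hk)).det := by
    intro k hk
    match k with
    | 0 =>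
      have h1 : (H.submatrix (Fin.castLE hk) (Fin.castLE hk)).det
          = MvPolynomial.eval a (P n 0) := by
        rw [Matrix.det_fin_one]
        rfl
      rw [h1, P]
      simp only [map_natCast]
      exact_mod_cast (by omega : 0 < n)
    | (k'+1) =>
      have hj : k' < n - 1 := by omega
      have h2 := hpos ⟨k', hj⟩
      rw [eval_Fpoly] at h2
      have h3 : H.submatrix (Fin.castLE hk) (Fin.castLE hk)
          = Matrix.of fun k l : Fin (((⟨k', hj⟩ : Fin (n-1)):ℕ)+2) =>
            MvPolynomial.eval a (P n ((k:ℕ)+(l:ℕ))) := by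
        ext i j; rfl
      rw [h3]
      exact h2
  have hpd : H.PosDef := sylvester n H hherm hminor
  obtain ⟨z, hz, hmap⟩ := exists_roots_fn (by omega) a
  have hcoef := hcoef_of_prod a z hz
  have hsk := newton_eval a z hcoef
  have hs : ∀ k l : Fin n, ((H k l : ℝ) : ℂ) = ∑ i, z i ^ ((k:ℕ) + (l:ℕ)) :=
    fun k l => hsk _
  have hreal := all_real_of_posDef a z hmap H hs hpd
  set t : Fin n → ℝ := fun i => (z i).re with ht
  have hzt : ∀ i, z i = ((t i : ℝ) : ℂ) := by
    intro i
    apply Complex.ext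
    · simp [ht]
    · simp [hreal i]
  have hHreal : ∀ k l : Fin n, H k l = ∑ i, t i ^ ((k:ℕ) + (l:ℕ)) := by
    intro k l
    have h1 := hs k l
    rw [Finset.sum_congr rfl fun i _ => by rw [hzt i]] at h1
    exact_mod_cast h1
  have hinj := inj_of_posDef t H hHreal hpd
  refine ⟨t, hinj, ?_⟩
  apply Polynomial.map_injective (algebraMap ℝ ℂ) (algebraMap ℝ ℂ).injective
  rw [hz, Polynomial.map_prod]
  apply Finset.prod_congr rfl
  intro i _
  rw [Polynomial.map_sub, Polynomial.map_X, Polynomial.map_C]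
  rw [show (algebraMap ℝ ℂ) (t i) = ((t i : ℝ) : ℂ) from rfl, ← hzt i]


end DRR

open Polynomial

/-- Semialgebraicity of the set `Sₙ` of monic real polynomials of degree `n` with `n`
distinct real roots: there are polynomials `F₂,…,Fₙ` (here indexed by `Fin (n-1)`) in the
coefficients such that `xⁿ + a₁x^{n−1} + ⋯ + aₙ` has `n` distinct real roots iff all the
`Fⱼ` are positive at `(a₁,…,aₙ)`. -/
theorem distinct_real_roots_semialgebraic (n : ℕ) :
    ∃ F : Fin (n - 1) → MvPolynomial (Fin n) ℝ,
      ∀ a : Fin n → ℝ,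
        ((∃ r : Fin n → ℝ, Function.Injective r ∧
            (X : Polynomial ℝ) ^ n + ∑ i : Fin n, Polynomial.C (a i) * X ^ (n - 1 - (i : ℕ)) =
              ∏ i : Fin n, (X - Polynomial.C (r i))) ↔
          ∀ j : Fin (n - 1), 0 < MvPolynomial.eval a (F j)) := by
  match n with
  | 0 =>
    exact ⟨fun j => j.elim0, fun a =>
      ⟨fun _ j => j.elim0, fun _ => ⟨Fin.elim0, fun x => x.elim0, by simp⟩⟩⟩
  | 1 =>
    refine ⟨fun j => j.elim0, fun a =>
      ⟨fun _ j => j.elim0, fun _ => ⟨fun _ => -(a 0), fun x y _ => Subsingleton.elim x y, ?_⟩⟩⟩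
    simp [Fin.sum_univ_one, Fin.prod_univ_one, sub_neg_eq_add]
  | (m+2) =>
    refine ⟨DRR.Fpoly (m+2), fun a => ⟨?_, ?_⟩⟩
    · rintro ⟨r, hinj, hfact⟩ j
      exact DRR.forward a r hinj hfact j
    · intro hpos
      exact DRR.backward (by omega) a hpos
end

section
/- The set E_{n,d} of real homogeneous polynomials G(x₀,...,xₙ) of degree d, monic of degree d in x₀, such that for every (x₁,...,xₙ) ∈ ℝⁿ∖{0} the univariate polynomial x₀ ↦ G(x₀, x₁,...,xₙ) has d distinct real roots, is an open subset of the space of such monic polynomials (with the topology induced by the coefficients). -/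
open Polynomial

/-- For a coefficient vector `a` of a polynomial
`G(x₀,…,xₙ) = x₀^d + Σ_{i₀+⋯+iₙ=d, i₀<d} c_m x₀^{i₀}x₁^{i₁}⋯xₙ^{iₙ}`, monic of degree `d`
in `x₀`, and a point `x ∈ ℝⁿ`, the univariate polynomial `x₀ ↦ G(x₀, x₁,…,xₙ)`. -/
noncomputable def univSpecialization (n d : ℕ)
    (a : (Fin (n + 1) → Fin (d + 1)) → ℝ) (x : Fin n → ℝ) : Polynomial ℝ :=
  X ^ d + ∑ m : Fin (n + 1) → Fin (d + 1),
    if (∑ i, (m i : ℕ)) = d ∧ (m 0 : ℕ) < d then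
      Polynomial.C (a m * ∏ i : Fin n, x i ^ (m i.succ : ℕ)) * X ^ (m 0 : ℕ)
    else 0

namespace EndAux

variable {n d : ℕ} (a : (Fin (n + 1) → Fin (d + 1)) → ℝ) (x : Fin n → ℝ)

lemma degree_tail_lt :
    (∑ m : Fin (n + 1) → Fin (d + 1),
      if (∑ i, (m i : ℕ)) = d ∧ (m 0 : ℕ) < d then
        Polynomial.C (a m * ∏ i : Fin n, x i ^ (m i.succ : ℕ)) * X ^ (m 0 : ℕ)
      else 0).degree < (d : WithBot ℕ) := by
  refine lt_of_le_of_lt (degree_sum_le _ _) ?_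
  rw [Finset.sup_lt_iff (by exact_mod_cast WithBot.bot_lt_coe d)]
  intro m _
  split_ifs with h
  · refine lt_of_le_of_lt (degree_mul_le _ _) ?_
    refine lt_of_le_of_lt (add_le_add degree_C_le (degree_X_pow _).le) ?_
    · simp only [zero_add]
      exact_mod_cast WithBot.coe_lt_coe.mpr h.2
  · simp only [degree_zero]
    exact WithBot.bot_lt_coe d

lemma monic_univSpec : (univSpecialization n d a x).Monic := by
  rcases Nat.eq_zero_or_pos d with rfl | hd
  · have : univSpecialization n 0 a x = 1 := by
      simp [univSpecialization]
    rw [this]; exact monic_one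
  · exact monic_X_pow_add (degree_tail_lt a x)

lemma natDegree_univSpec : (univSpecialization n d a x).natDegree = d := by
  have h := degree_tail_lt a x
  have : (univSpecialization n d a x).degree = d := by
    rw [univSpecialization, degree_add_eq_left_of_degree_lt (by simpa using h), degree_X_pow]
  exact natDegree_eq_of_degree_eq_some this

lemma eval_univSpec (s : ℝ) :
    (univSpecialization n d a x).eval s =
      s ^ d + ∑ m : Fin (n + 1) → Fin (d + 1),
        if (∑ i, (m i : ℕ)) = d ∧ (m 0 : ℕ) < d then
          a m * (∏ i : Fin n, x i ^ (m i.succ : ℕ)) * s ^ (m 0 : ℕ)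
        else 0 := by
  simp [univSpecialization, eval_finset_sum, apply_ite (eval s), eval_prod]

lemma continuous_eval (s : ℝ) :
    Continuous fun p : ((Fin (n + 1) → Fin (d + 1)) → ℝ) × (Fin n → ℝ) =>
      (univSpecialization n d p.1 p.2).eval s := by
  simp only [eval_univSpec]
  refine continuous_const.add (continuous_finset_sum _ fun m _ => ?_)
  split_ifs with h
  · exact (((continuous_apply m).comp continuous_fst).mul
      (continuous_finset_prod _ fun i _ =>
        ((continuous_apply i).comp continuous_snd).pow _)).mul continuous_const
  · exact continuous_const

lemma scale_spec {c : ℝ} (hc : c ≠ 0) :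
    univSpecialization n d a (c • x) =
      C (c ^ d) * (univSpecialization n d a x).comp (C c⁻¹ * X) := by
  rw [univSpecialization, univSpecialization, add_comp, mul_add]
  congr 1
  · rw [pow_comp, X_comp, mul_pow, ← C_pow, ← mul_assoc, ← C_mul, ← mul_pow,
      mul_inv_cancel₀ hc, one_pow, C_1, one_mul]
  · rw [sum_comp, Finset.mul_sum]
    refine Finset.sum_congr rfl fun m _ => ?_
    split_ifs with h
    · have hsum : (∑ i : Fin n, (m i.succ : ℕ)) = d - (m 0 : ℕ) := by
        have := h.1
        rw [Fin.sum_univ_succ] at this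
        omega
      rw [mul_comp, pow_comp, C_comp, X_comp, mul_pow, ← C_pow, ← mul_assoc, ← mul_assoc,
        ← C_mul, ← C_mul]
      congr 2
      have hprod : ∏ i : Fin n, (c • x) i ^ (m i.succ : ℕ)
          = c ^ (d - (m 0 : ℕ)) * ∏ i : Fin n, x i ^ (m i.succ : ℕ) := by
        simp only [Pi.smul_apply, smul_eq_mul, mul_pow, Finset.prod_mul_distrib,
          Finset.prod_pow_eq_pow_sum, hsum]
      rw [hprod, pow_sub₀ c hc h.2.le]
      field_simp
      rw [one_div, inv_pow, eq_mul_inv_iff_mul_eq₀ (pow_ne_zero _ hc)]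
      ring
    · simp

lemma scale_roots {c : ℝ} (hc : c ≠ 0) {r : Fin d → ℝ} (hr : Function.Injective r)
    (heq : univSpecialization n d a x = ∏ i : Fin d, (X - C (r i))) :
    ∃ r' : Fin d → ℝ, Function.Injective r' ∧
      univSpecialization n d a (c • x) = ∏ i : Fin d, (X - C (r' i)) := by
  refine ⟨fun i => c * r i, fun i j hij => hr (mul_left_cancel₀ hc hij), ?_⟩
  rw [scale_spec a x hc, heq, prod_comp]
  have hfac : ∀ i : Fin d, (X - C (r i)).comp (C c⁻¹ * X)
      = C c⁻¹ * (X - C (c * r i)) := by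
    intro i
    rw [sub_comp, X_comp, C_comp, mul_sub, ← C_mul, inv_mul_cancel_left₀ hc]
  simp only [hfac, Finset.prod_mul_distrib, Finset.prod_const, Finset.card_univ,
    Fintype.card_fin, ← C_pow, ← mul_assoc, ← C_mul, ← mul_pow, mul_inv_cancel₀ hc,
    one_pow, C_1, one_mul]

lemma exists_sorted {d : ℕ} (r : Fin d → ℝ) (hr : Function.Injective r) :
    ∃ s : Fin d → ℝ, StrictMono s ∧
      (∏ i : Fin d, (X - C (r i))) = ∏ i : Fin d, (X - C (s i)) := by
  have hcard : (Finset.univ.image r).card = d := by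
    rw [Finset.card_image_of_injective _ hr, Finset.card_univ, Fintype.card_fin]
  set F := Finset.univ.image r with hF
  set e : Fin d → ℝ := fun k => F.orderEmbOfFin hcard k with he
  have hmono : StrictMono e := (F.orderEmbOfFin hcard).strictMono
  refine ⟨e, hmono, ?_⟩
  have himg : Finset.univ.image e = F := by
    ext v
    simp only [Finset.mem_image, Finset.mem_univ, true_and]
    constructor
    · rintro ⟨k, rfl⟩; exact Finset.orderEmbOfFin_mem F hcard k
    · intro hv
      have : v ∈ Set.range (F.orderEmbOfFin hcard) := by
        rw [Finset.range_orderEmbOfFin]; exact_mod_cast hv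
      exact this
  calc (∏ i : Fin d, (X - C (r i)))
      = ∏ v ∈ F, (X - C v) := by
        rw [hF]
        exact (Finset.prod_image (g := r)
          (f := fun v => (X - C v : Polynomial ℝ)) fun a _ b _ h => hr h).symm
    _ = ∏ i : Fin d, (X - C (e i)) := by
        rw [← himg]
        exact Finset.prod_image (g := e)
          (f := fun v => (X - C v : Polynomial ℝ)) fun a _ b _ h => hmono.injective h

lemma signs_of_sorted {d : ℕ} (s : Fin d → ℝ) (hs : StrictMono s) :
    ∃ t : Fin (d + 1) → ℝ, StrictMono t ∧ ∀ k : Fin (d + 1),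
      0 < (-1 : ℝ) ^ (d - (k : ℕ)) * (∏ i : Fin d, (X - C (s i))).eval (t k) := by
  classical
  set G : Finset ℝ :=
    insert 1 ((Finset.univ : Finset (Fin d × Fin d)).image
      fun jk => if s jk.1 < s jk.2 then s jk.2 - s jk.1 else 1) with hG
  have hGne : G.Nonempty := ⟨1, Finset.mem_insert_self _ _⟩
  have hGpos : ∀ g ∈ G, 0 < g := by
    intro g hg
    rw [hG, Finset.mem_insert] at hg
    rcases hg with rfl | hg
    · norm_num
    · obtain ⟨jk, -, rfl⟩ := Finset.mem_image.1 hg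
      split_ifs with h
      · linarith
      · norm_num
  set δ : ℝ := G.min' hGne / 2 with hδ
  have hδpos : 0 < δ := by
    have := hGpos _ (G.min'_mem hGne)
    rw [hδ]; linarith
  have hδlt : ∀ j k : Fin d, s j < s k → δ < s k - s j := by
    intro j k h
    have hmem : s k - s j ∈ G := by
      rw [hG, Finset.mem_insert]
      right
      exact Finset.mem_image.2 ⟨(j, k), Finset.mem_univ _, if_pos h⟩
    have := G.min'_le _ hmem
    have h0 := hGpos _ (G.min'_mem hGne)
    rw [hδ]; linarith
  set t : Fin (d + 1) → ℝ := fun k =>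
    if h : (k : ℕ) < d then s ⟨k, h⟩ - δ
    else if hd : 0 < d then s ⟨d - 1, Nat.sub_lt hd one_pos⟩ + 1 else 0 with ht
  have key : ∀ (k : Fin (d + 1)) (i : Fin d),
      (((i : ℕ) < (k : ℕ)) → s i < t k) ∧ (((k : ℕ) ≤ (i : ℕ)) → t k < s i) := by
    intro k i
    constructor
    · intro hik
      simp only [ht]
      by_cases h : (k : ℕ) < d
      · rw [dif_pos h]
        have hlt : s i < s ⟨k, h⟩ := hs (by exact_mod_cast hik)
        have := hδlt i ⟨k, h⟩ hlt
        linarith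
      · have hd : 0 < d := i.pos
        rw [dif_neg h, dif_pos hd]
        have : s i ≤ s ⟨d - 1, Nat.sub_lt hd one_pos⟩ :=
          hs.monotone (by simp [Fin.le_def]; omega)
        linarith
    · intro hki
      have h : (k : ℕ) < d := lt_of_le_of_lt hki i.isLt
      simp only [ht]
      rw [dif_pos h]
      have : s ⟨k, h⟩ ≤ s i := hs.monotone (by simp [Fin.le_def]; exact hki)
      linarith
  have hmono : StrictMono t := by
    intro k l hkl
    have hkl' : (k : ℕ) < (l : ℕ) := hkl
    simp only [ht]
    by_cases hk : (k : ℕ) < d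
    · by_cases hl : (l : ℕ) < d
      · rw [dif_pos hk, dif_pos hl]
        have : s ⟨k, hk⟩ < s ⟨l, hl⟩ := hs (Fin.mk_lt_mk.mpr hkl')
        linarith
      · have hd : 0 < d := Nat.pos_of_ne_zero (by omega)
        rw [dif_pos hk, dif_neg hl, dif_pos hd]
        have : s ⟨k, hk⟩ ≤ s ⟨d - 1, Nat.sub_lt hd one_pos⟩ :=
          hs.monotone (by simp [Fin.le_def]; omega)
        linarith
    · exfalso
      have := l.isLt
      omega
  refine ⟨t, hmono, ?_⟩
  intro k
  classical
  set A : Finset (Fin d) := Finset.univ.filter (fun i => (i : ℕ) < (k : ℕ)) with hA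
  set B : Finset (Fin d) := Finset.univ.filter (fun i => ¬ (i : ℕ) < (k : ℕ)) with hB
  have hcardA : A.card = (k : ℕ) := by
    by_cases hk : (k : ℕ) < d
    · have : A = Finset.Iio (⟨k, hk⟩ : Fin d) := by
        ext i
        simp [hA, Finset.mem_Iio, Fin.lt_def]
      rw [this, Fin.card_Iio]
    · have hk' : (k : ℕ) = d := by have := k.isLt; omega
      have : A = Finset.univ := by
        ext i
        simp only [hA, Finset.mem_filter, Finset.mem_univ, true_and, iff_true]
        have := i.isLt; omega
      rw [this, Finset.card_univ, Fintype.card_fin, hk']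
  have hcardB : B.card = d - (k : ℕ) := by
    have := Finset.card_filter_add_card_filter_not
      (s := (Finset.univ : Finset (Fin d))) (p := fun i => (i : ℕ) < (k : ℕ))
    rw [Finset.card_univ, Fintype.card_fin] at this
    have hk := k.isLt
    rw [hB]
    rw [hA] at hcardA
    omega
  have heval : (∏ i : Fin d, (X - C (s i))).eval (t k) = ∏ i : Fin d, (t k - s i) := by
    simp [eval_prod]
  rw [heval, ← Finset.prod_filter_mul_prod_filter_not Finset.univ
    (fun i : Fin d => (i : ℕ) < (k : ℕ)) (fun i : Fin d => t k - s i), ← hA, ← hB]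
  have hBneg : (-1 : ℝ) ^ (d - (k : ℕ)) * ∏ i ∈ B, (t k - s i) = ∏ i ∈ B, (s i - t k) := by
    rw [← hcardB, ← Finset.prod_const (-1 : ℝ), ← Finset.prod_mul_distrib]
    exact Finset.prod_congr rfl fun i _ => by ring
  calc (0 : ℝ) < (∏ i ∈ A, (t k - s i)) * ∏ i ∈ B, (s i - t k) := by
        apply mul_pos
        · apply Finset.prod_pos
          intro i hi
          have : s i < t k := (key k i).1 (by simpa [hA] using hi)
          linarith
        · apply Finset.prod_pos
          intro i hi
          have : t k < s i := (key k i).2 (by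
            have := Finset.mem_filter.1 hi
            omega)
          linarith
    _ = (-1 : ℝ) ^ (d - (k : ℕ)) * ((∏ i ∈ A, (t k - s i)) * ∏ i ∈ B, (t k - s i)) := by
        rw [← hBneg]; ring

lemma roots_of_signs {d : ℕ} {p : Polynomial ℝ} (hm : p.Monic) (hdeg : p.natDegree = d)
    {t : Fin (d + 1) → ℝ} (ht : StrictMono t)
    (hsgn : ∀ k : Fin (d + 1), 0 < (-1 : ℝ) ^ (d - (k : ℕ)) * p.eval (t k)) :
    ∃ r : Fin d → ℝ, Function.Injective r ∧ p = ∏ i : Fin d, (X - C (r i)) := by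
  classical
  have hroot : ∀ k : Fin d, ∃ u ∈ Set.Ioo (t k.castSucc) (t k.succ), p.eval u = 0 := by
    intro k
    have h1 := hsgn k.castSucc
    have h2 := hsgn k.succ
    have hc1 : (k.castSucc : ℕ) = (k : ℕ) := rfl
    have hc2 : (k.succ : ℕ) = (k : ℕ) + 1 := rfl
    rw [hc1] at h1
    rw [hc2] at h2
    have hk : (k : ℕ) < d := k.isLt
    have hle : t k.castSucc ≤ t k.succ := (ht (by simp [Fin.lt_def])).le
    set e : ℕ := d - ((k : ℕ) + 1) with he
    have hde : d - (k : ℕ) = e + 1 := by omega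
    rw [hde, pow_succ] at h1
    rcases Nat.even_or_odd e with hev | hod
    · have hpe : (-1 : ℝ) ^ e = 1 := hev.neg_one_pow
      rw [hpe] at h1 h2
      simp only [one_mul] at h2
      have h1' : p.eval (t k.castSucc) < 0 := by nlinarith
      have h0 : (0 : ℝ) ∈ Set.Ioo (p.eval (t k.castSucc)) (p.eval (t k.succ)) := ⟨h1', h2⟩
      obtain ⟨u, hu, hu0⟩ :=
        intermediate_value_Ioo hle (Polynomial.continuous p).continuousOn h0
      exact ⟨u, hu, hu0⟩
    · have hpe : (-1 : ℝ) ^ e = -1 := hod.neg_one_pow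
      rw [hpe] at h1 h2
      have h1' : 0 < p.eval (t k.castSucc) := by nlinarith
      have h2' : p.eval (t k.succ) < 0 := by nlinarith
      have h0 : (0 : ℝ) ∈ Set.Ioo (p.eval (t k.succ)) (p.eval (t k.castSucc)) := ⟨h2', h1'⟩
      obtain ⟨u, hu, hu0⟩ :=
        intermediate_value_Ioo' hle (Polynomial.continuous p).continuousOn h0
      exact ⟨u, hu, hu0⟩
  choose r hrmem hrzero using hroot
  have hrs : StrictMono r := by
    intro k l hkl
    have h1 : r k < t k.succ := (hrmem k).2
    have h2 : t l.castSucc < r l := (hrmem l).1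
    have h3 : t k.succ ≤ t l.castSucc := ht.monotone (by
      simp [Fin.le_def]
      exact hkl)
    linarith
  refine ⟨r, hrs.injective, ?_⟩
  have hp0 : p ≠ 0 := hm.ne_zero
  set M : Multiset ℝ := Multiset.map r Finset.univ.val with hM
  have hnodup : M.Nodup := Multiset.Nodup.map hrs.injective Finset.univ.nodup
  have hle : M ≤ p.roots := by
    rw [Multiset.le_iff_count]
    intro b
    by_cases hb : b ∈ M
    · rw [Multiset.count_eq_one_of_mem hnodup hb]
      obtain ⟨k, -, rfl⟩ := Multiset.mem_map.1 hb
      rw [Polynomial.count_roots]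
      exact (Polynomial.rootMultiplicity_pos hp0).2 (hrzero k)
    · rw [Multiset.count_eq_zero_of_notMem hb]
      exact Nat.zero_le _
  have hdvd : (∏ i : Fin d, (X - C (r i))) ∣ p := by
    have := (Multiset.prod_X_sub_C_dvd_iff_le_roots hp0 M).2 hle
    rw [hM, Multiset.map_map] at this
    convert this using 1
    rfl
  have hmq : (∏ i : Fin d, (X - C (r i))).Monic :=
    monic_prod_of_monic _ _ fun i _ => monic_X_sub_C (r i)
  have hdq : (∏ i : Fin d, (X - C (r i))).natDegree = d := by
    rw [natDegree_prod _ _ fun i _ => X_sub_C_ne_zero (r i)]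
    simp
  exact eq_of_monic_of_dvd_of_natDegree_le hmq hm hdvd (by rw [hdeg, hdq])

/-- The set of `(a, x)` such that the specialization has `d` distinct real roots. -/
def distinctSet (n d : ℕ) : Set ((((Fin (n + 1) → Fin (d + 1)) → ℝ)) × (Fin n → ℝ)) :=
  {y | ∃ r : Fin d → ℝ, Function.Injective r ∧
    univSpecialization n d y.1 y.2 = ∏ i : Fin d, (X - C (r i))}

lemma isOpen_distinctSet : IsOpen (distinctSet n d) := by
  have hset : distinctSet n d = ⋃ t ∈ {t : Fin (d + 1) → ℝ | StrictMono t},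
      ⋂ k : Fin (d + 1),
        {y : (((Fin (n + 1) → Fin (d + 1)) → ℝ)) × (Fin n → ℝ) |
          0 < (-1 : ℝ) ^ (d - (k : ℕ)) * (univSpecialization n d y.1 y.2).eval (t k)} := by
    ext y
    simp only [distinctSet, Set.mem_setOf_eq, Set.mem_iUnion, Set.mem_iInter, exists_prop]
    constructor
    · rintro ⟨r, hr, heq⟩
      obtain ⟨s, hs, hprod⟩ := exists_sorted r hr
      obtain ⟨t, hmono, hsgn⟩ := signs_of_sorted s hs
      exact ⟨t, hmono, fun k => by rw [heq, hprod]; exact hsgn k⟩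
    · rintro ⟨t, hmono, hsgn⟩
      exact roots_of_signs (monic_univSpec y.1 y.2) (natDegree_univSpec y.1 y.2) hmono hsgn
  rw [hset]
  refine isOpen_biUnion fun t _ => isOpen_iInter_of_finite fun k => ?_
  exact isOpen_lt continuous_const (continuous_const.mul (continuous_eval (t k)))

end EndAux

open EndAux in
/-- `E_{n,d}`, the set of coefficient vectors of degree-`d` homogeneous polynomials monic
in `x₀` such that for every `(x₁,…,xₙ) ≠ 0` the univariate polynomial in `x₀` has `d`
distinct real roots, is open in the coefficient space. -/
theorem E_nd_isOpen (n d : ℕ) :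
    IsOpen {a : (Fin (n + 1) → Fin (d + 1)) → ℝ |
      ∀ x : Fin n → ℝ, x ≠ 0 →
        ∃ r : Fin d → ℝ, Function.Injective r ∧
          univSpecialization n d a x = ∏ i : Fin d, (X - Polynomial.C (r i))} := by
  rw [isOpen_iff_mem_nhds]
  intro a ha
  have hsub : ({a} : Set ((Fin (n + 1) → Fin (d + 1)) → ℝ)) ×ˢ
      Metric.sphere (0 : Fin n → ℝ) 1 ⊆ distinctSet n d := by
    rintro ⟨a', x⟩ ⟨ha', hx⟩
    rw [Set.mem_singleton_iff] at ha'
    subst ha'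
    have hx0 : x ≠ 0 := by
      intro h
      rw [h, Metric.mem_sphere, dist_self] at hx
      norm_num at hx
    exact ha x hx0
  obtain ⟨u, v, hu, hv, hau, hsv, huv⟩ :=
    generalized_tube_lemma isCompact_singleton (isCompact_sphere (0 : Fin n → ℝ) 1)
      isOpen_distinctSet hsub
  refine Filter.mem_of_superset (hu.mem_nhds (hau rfl)) ?_
  intro a' ha' x hx
  set c : ℝ := ‖x‖ with hc
  have hc0 : c ≠ 0 := norm_ne_zero_iff.2 hx
  have hx1 : c⁻¹ • x ∈ Metric.sphere (0 : Fin n → ℝ) 1 := by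
    rw [mem_sphere_zero_iff_norm, norm_smul, norm_inv, norm_norm, ← hc,
      inv_mul_cancel₀ hc0]
  have hmem : (a', c⁻¹ • x) ∈ distinctSet n d := huv ⟨ha', hsv hx1⟩
  obtain ⟨r, hr, heq⟩ := hmem
  obtain ⟨r', hr', heq'⟩ := scale_roots a' (c⁻¹ • x) hc0 hr heq
  rw [smul_inv_smul₀ hc0] at heq'
  exact ⟨r', hr', heq'⟩
end

section
/- Let π : ℂℙⁿ ∖ L → ℂℙᵐ be a projection whose components are real linear forms f₀,...,f_m ∈ ℝ[x₀,...,xₙ], where L is the common zero locus of the fⱼ. Let V ⊆ ℂℙⁿ ∖ L be an irreducible complex projective variety of dimension p which is the complexification of its real points Re(V) (i.e., dim_ℝ Re(V) = p and V = ZI(Re(V))). Then π(V) is the complexification of its real points: dim_ℝ Re(π(V)) = p, equivalently ZI(Re(π(V))) = π(V). -/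
open MvPolynomial Ideal

noncomputable section ElimAux

lemma homogeneousComponent_mem_span {σ : Type*} (Q : Set (MvPolynomial σ ℂ))
    (hQ : ∀ q ∈ Q, ∃ d, q.IsHomogeneous d) :
    ∀ p ∈ Ideal.span Q, ∀ d, homogeneousComponent d p ∈ Ideal.span Q := by
  intro p hp
  induction hp using Submodule.span_induction with
  | mem q hq =>
    intro d
    obtain ⟨e, he⟩ := hQ q hq
    rw [homogeneousComponent_of_mem ((mem_homogeneousSubmodule _ _).2 he)]
    split
    · exact Ideal.subset_span hq
    · exact Ideal.zero_mem _
  | zero => intro d; simp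
  | add x y hx hy ihx ihy => intro d; simpa using Ideal.add_mem _ (ihx d) (ihy d)
  | smul a x hx ihx =>
    intro d
    have key : homogeneousComponent d (a * x) =
        ∑ e ∈ Finset.range (a.totalDegree + 1), ∑ f ∈ Finset.range (x.totalDegree + 1),
          homogeneousComponent d (homogeneousComponent e a * homogeneousComponent f x) := by
      conv_lhs => rw [← sum_homogeneousComponent a, ← sum_homogeneousComponent x,
        Finset.sum_mul_sum]
      rw [map_sum]
      exact Finset.sum_congr rfl fun e _ => map_sum _ _ _
    rw [smul_eq_mul, key]
    apply Ideal.sum_mem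
    intro e _
    apply Ideal.sum_mem
    intro f _
    rw [homogeneousComponent_of_mem ((mem_homogeneousSubmodule _ _).2
      ((homogeneousComponent_isHomogeneous e a).mul (homogeneousComponent_isHomogeneous f x)))]
    split
    · exact Ideal.mul_mem_left _ _ (ihx f)
    · exact Ideal.zero_mem _

lemma homogeneousComponent_mul_linear {σ : Type*} (c ℓ : MvPolynomial σ ℂ)
    (hℓ : ℓ.IsHomogeneous 1) (N : ℕ) :
    homogeneousComponent (N + 1) (c * ℓ) = homogeneousComponent N c * ℓ := by
  conv_lhs => rw [← sum_homogeneousComponent c, Finset.sum_mul]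
  rw [map_sum]
  rw [Finset.sum_congr rfl (fun e _ => homogeneousComponent_of_mem
    ((mem_homogeneousSubmodule _ _).2
      ((homogeneousComponent_isHomogeneous e c).mul hℓ)))]
  simp only [Nat.add_right_cancel_iff]
  rw [Finset.sum_ite_eq]
  split
  · rfl
  · rename_i h
    rw [homogeneousComponent_eq_zero, zero_mul]
    simp only [Finset.mem_range, not_lt] at h
    omega

lemma eval_aeval' {σ τ : Type*} (w : σ → ℂ) (ℓ : τ → MvPolynomial σ ℂ)
    (f : MvPolynomial τ ℂ) :
    eval w (aeval ℓ f) = eval (fun j => eval w (ℓ j)) f := by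
  induction f using MvPolynomial.induction_on with
  | C c => simp
  | add p q hp hq => simp only [map_add, hp, hq]
  | mul_X p i hp => simp only [_root_.map_mul, aeval_X, eval_X, hp]

lemma aeval_homogeneousComponent_comm {σ τ : Type*} (ℓ : τ → MvPolynomial σ ℂ)
    (hℓ : ∀ j, (ℓ j).IsHomogeneous 1) (g : MvPolynomial τ ℂ) (d : ℕ) :
    homogeneousComponent d (aeval ℓ g) = aeval ℓ (homogeneousComponent d g) := by
  conv_lhs => rw [← sum_homogeneousComponent g, map_sum, map_sum]
  rw [Finset.sum_congr rfl (fun e _ => homogeneousComponent_of_mem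
    ((mem_homogeneousSubmodule _ _).2 (by
      simpa using (homogeneousComponent_isHomogeneous e g).aeval ℓ (fun i => hℓ i))))]
  rw [Finset.sum_ite_eq]
  split
  · rfl
  · rename_i h
    simp only [Finset.mem_range, not_lt] at h
    rw [homogeneousComponent_eq_zero _ _ h, map_zero]


set_option maxHeartbeats 1000000 in
/-- Main theorem of elimination theory, in the form we need: if the cone `zeroLocus (span Q)`
meets the common kernel of the linear forms `ℓ j` only in `0`, then every point `z` killed by
all polynomials in the kernel of substitution is in the image. -/
lemma elimination_key {n m : ℕ}
    (Q : Set (MvPolynomial (Fin (n + 1)) ℂ))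
    (hQ : ∀ q ∈ Q, ∃ d, q.IsHomogeneous d)
    (ℓ : Fin (m + 1) → MvPolynomial (Fin (n + 1)) ℂ)
    (hℓ1 : ∀ j, (ℓ j).IsHomogeneous 1)
    (hL : ∀ w ∈ MvPolynomial.zeroLocus ℂ (Ideal.span Q), (∀ j, eval w (ℓ j) = 0) → w = 0)
    (z : Fin (m + 1) → ℂ)
    (hker : ∀ g : MvPolynomial (Fin (m + 1)) ℂ, aeval ℓ g ∈ Ideal.span Q → eval z g = 0) :
    ∃ w ∈ MvPolynomial.zeroLocus ℂ (Ideal.span Q), ∀ j, eval w (ℓ j) = z j := by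
  classical
  set I : Ideal (MvPolynomial (Fin (n + 1)) ℂ) := Ideal.span Q with hIdef
  set K : Ideal (MvPolynomial (Fin (n + 1)) ℂ) := I ⊔ Ideal.span (Set.range ℓ) with hKdef
  -- Step 1: each `X i` is in the radical of `K`.
  have hXrad : ∀ i, (X i : MvPolynomial (Fin (n + 1)) ℂ) ∈ K.radical := by
    intro i
    rw [← MvPolynomial.vanishingIdeal_zeroLocus_eq_radical (K := ℂ)]
    intro x hx
    have hxV : x ∈ MvPolynomial.zeroLocus ℂ I :=
      fun p hp => hx p (Ideal.mem_sup_left hp)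
    have hxl : ∀ j, eval x (ℓ j) = 0 := fun j =>
      hx (ℓ j) (Ideal.mem_sup_right (Ideal.subset_span ⟨j, rfl⟩))
    have : x = 0 := hL x hxV hxl
    simp [this]
  -- Step 2: uniform exponent
  have hXpow : ∀ i, ∃ N, (X i : MvPolynomial (Fin (n + 1)) ℂ) ^ N ∈ K := fun i => hXrad i
  choose N₀ hN₀ using hXpow
  set N : ℕ := Finset.univ.sup N₀ with hNdef
  have hXNK : ∀ i, (X i : MvPolynomial (Fin (n + 1)) ℂ) ^ (N + 1) ∈ K := by
    intro i
    have hle : N₀ i ≤ N + 1 := le_trans (Finset.le_sup (Finset.mem_univ i)) (Nat.le_succ N)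
    have : (X i : MvPolynomial (Fin (n + 1)) ℂ) ^ (N + 1)
        = X i ^ N₀ i * X i ^ (N + 1 - N₀ i) := by
      rw [← pow_add, Nat.add_sub_cancel' hle]
    rw [this]
    exact K.mul_mem_right _ (hN₀ i)
  -- Step 3: homogeneous decomposition of `X i ^ (N+1)`
  have hdecomp : ∀ i, ∃ (q : MvPolynomial (Fin (n + 1)) ℂ)
      (h : Fin (m + 1) → MvPolynomial (Fin (n + 1)) ℂ),
      q ∈ I ∧ (∀ j, (h j).totalDegree ≤ N) ∧
      (X i : MvPolynomial (Fin (n + 1)) ℂ) ^ (N + 1) = q + ∑ j, h j * ℓ j := by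
    intro i
    obtain ⟨q₀, hq₀, r, hr, hqr⟩ := Submodule.mem_sup.1 (hXNK i)
    obtain ⟨c, hc⟩ := (Ideal.mem_span_range_iff_exists_fun).1 hr
    refine ⟨homogeneousComponent (N + 1) q₀, fun j => homogeneousComponent N (c j),
      homogeneousComponent_mem_span Q hQ q₀ hq₀ (N + 1),
      fun j => (homogeneousComponent_isHomogeneous N (c j)).totalDegree_le, ?_⟩
    have hX : (X i : MvPolynomial (Fin (n + 1)) ℂ) ^ (N + 1)
        = homogeneousComponent (N + 1) (X i ^ (N + 1)) := by
      rw [homogeneousComponent_of_mem ((mem_homogeneousSubmodule _ _).2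
        (isHomogeneous_X_pow i (N + 1))), if_pos rfl]
    conv_lhs => rw [hX, ← hqr, ← hc]
    rw [map_add, map_sum]
    congr 1
    exact Finset.sum_congr rfl fun j _ => homogeneousComponent_mul_linear _ _ (hℓ1 j) N
  -- Step 4: algebra setup
  set ψ : MvPolynomial (Fin (m + 1)) ℂ →+* (MvPolynomial (Fin (n + 1)) ℂ ⧸ I) :=
    (Ideal.Quotient.mk I).comp
      ((aeval ℓ : MvPolynomial (Fin (m + 1)) ℂ →ₐ[ℂ] MvPolynomial (Fin (n + 1)) ℂ) :
        MvPolynomial (Fin (m + 1)) ℂ →+* MvPolynomial (Fin (n + 1)) ℂ) with hψdef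
  letI : Algebra (MvPolynomial (Fin (m + 1)) ℂ) (MvPolynomial (Fin (n + 1)) ℂ ⧸ I) := ψ.toAlgebra
  letI : Module (MvPolynomial (Fin (m + 1)) ℂ) (MvPolynomial (Fin (n + 1)) ℂ ⧸ I) := Algebra.toModule
  have hψ : ∀ g, algebraMap (MvPolynomial (Fin (m + 1)) ℂ) (MvPolynomial (Fin (n + 1)) ℂ ⧸ I) g
      = Ideal.Quotient.mk I (aeval ℓ g) := fun g => rfl
  -- Step 5: module finiteness
  have hsmulC : ∀ (c : ℂ) (r : MvPolynomial (Fin (n + 1)) ℂ),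
      Ideal.Quotient.mk I (C c * r)
        = (C c : MvPolynomial (Fin (m + 1)) ℂ) • Ideal.Quotient.mk I r := by
    intro c r
    rw [Algebra.smul_def, hψ, ← _root_.map_mul, aeval_C]
    rfl
  have hsmulX : ∀ (j : Fin (m + 1)) (r : MvPolynomial (Fin (n + 1)) ℂ),
      Ideal.Quotient.mk I (ℓ j * r)
        = (X j : MvPolynomial (Fin (m + 1)) ℂ) • Ideal.Quotient.mk I r := by
    intro j r
    rw [Algebra.smul_def, hψ, ← _root_.map_mul, aeval_X]
  set D : ℕ := (n + 1) * N with hDdef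
  set G : Set (MvPolynomial (Fin (n + 1)) ℂ ⧸ I) := (fun s : Fin (n + 1) →₀ ℕ => Ideal.Quotient.mk I (monomial s 1)) ''
      {s | (∑ i, s i) ≤ D} with hGdef
  have hGfin : G.Finite := by
    apply Set.Finite.image
    have hsub : {s : Fin (n + 1) →₀ ℕ | (∑ i, s i) ≤ D}
        ⊆ ⇑Finsupp.equivFunOnFinite ⁻¹' (Set.pi Set.univ fun _ : Fin (n + 1) => Set.Iic D) := by
      intro s hs
      intro i _
      exact le_trans (Finset.single_le_sum (fun k _ => Nat.zero_le (s k)) (Finset.mem_univ i)) hs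
    exact Set.Finite.subset
      (Set.Finite.preimage ((Finsupp.equivFunOnFinite).injective.injOn)
        (Set.Finite.pi fun _ => Set.finite_Iic D)) hsub
  have hsum_eq : ∀ s : Fin (n + 1) →₀ ℕ, (s.sum fun _ e => e) = ∑ i, s i :=
    fun s => Finsupp.sum_fintype _ _ (fun _ => rfl)
  have hgen : ∀ (s : Fin (n + 1) →₀ ℕ) (c : ℂ), (∑ i, s i) ≤ D →
      Ideal.Quotient.mk I (monomial s c) ∈ Submodule.span (MvPolynomial (Fin (m + 1)) ℂ) G := by
    intro s c hsD
    have hcm : monomial s c = C c * monomial s 1 := by rw [C_mul_monomial, mul_one]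
    rw [hcm, hsmulC]
    exact Submodule.smul_mem _ _ (Submodule.subset_span ⟨s, hsD, rfl⟩)
  have hspan : ∀ (d : ℕ) (p : MvPolynomial (Fin (n + 1)) ℂ), p.totalDegree ≤ d →
      Ideal.Quotient.mk I p ∈ Submodule.span (MvPolynomial (Fin (m + 1)) ℂ) G := by
    intro d
    induction d with
    | zero =>
      intro p hp
      rw [← p.support_sum_monomial_coeff, map_sum]
      apply Submodule.sum_mem
      intro s hs
      apply hgen
      have hle : (s.sum fun _ e => e) ≤ 0 := le_trans (le_totalDegree hs) hp
      rw [hsum_eq] at hle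
      omega
    | succ d IH =>
      intro p hp
      rw [← p.support_sum_monomial_coeff, map_sum]
      apply Submodule.sum_mem
      intro s hs
      have hsd : (∑ i, s i) ≤ d + 1 := by
        rw [← hsum_eq]; exact le_trans (le_totalDegree hs) hp
      by_cases hD : (∑ i, s i) ≤ D
      · exact hgen s _ hD
      · push_neg at hD
        obtain ⟨i, hi⟩ : ∃ i, N + 1 ≤ s i := by
          by_contra hcon
          push_neg at hcon
          have hbound : (∑ i, s i) ≤ ∑ _i : Fin (n + 1), N :=
            Finset.sum_le_sum fun k _ => by have := hcon k; omega
          simp only [Finset.sum_const, Finset.card_univ, Fintype.card_fin, smul_eq_mul] at hbound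
          omega
        obtain ⟨q, h, hqI, hdeg, heq⟩ := hdecomp i
        have hsingle : Finsupp.single i (N + 1) ≤ s := Finsupp.single_le_iff.2 hi
        obtain ⟨s', hadd⟩ : ∃ s', Finsupp.single i (N + 1) + s' = s :=
          ⟨s - Finsupp.single i (N + 1), (add_comm _ _).trans (tsub_add_cancel_of_le hsingle)⟩
        have hsum' : (∑ k, s' k) + (N + 1) = ∑ k, s k := by
          have hcongr := congrArg (fun t : Fin (n + 1) →₀ ℕ => ∑ k, t k) hadd
          simp only [Finsupp.add_apply, Finset.sum_add_distrib] at hcongr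
          have hss : (∑ k, (Finsupp.single i (N + 1)) k) = N + 1 := by
            rw [Finset.sum_eq_single i]
            · simp
            · intro k _ hk; exact Finsupp.single_eq_of_ne' (Ne.symm hk)
            · intro hk; exact absurd (Finset.mem_univ i) hk
          omega
        have hmono : monomial s (coeff s p) = C (coeff s p) * (X i ^ (N + 1) * monomial s' 1) := by
          rw [X_pow_eq_monomial, monomial_mul, one_mul, C_mul_monomial, mul_one, hadd]
        rw [hmono, hsmulC]
        apply Submodule.smul_mem
        rw [heq, add_mul, map_add]
        have hq0 : Ideal.Quotient.mk I (q * monomial s' 1) = 0 :=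
          Ideal.Quotient.eq_zero_iff_mem.2 (I.mul_mem_right _ hqI)
        rw [hq0, zero_add, Finset.sum_mul, map_sum]
        apply Submodule.sum_mem
        intro j _
        have hcomm : h j * ℓ j * monomial s' 1 = ℓ j * (h j * monomial s' 1) := by ring
        rw [hcomm, hsmulX]
        apply Submodule.smul_mem
        apply IH
        have h1 : (h j * monomial s' 1).totalDegree
            ≤ (h j).totalDegree + (monomial s' (1 : ℂ)).totalDegree := totalDegree_mul _ _
        have h2 : (monomial s' (1 : ℂ)).totalDegree ≤ ∑ k, s' k := by
          rw [← hsum_eq]; exact totalDegree_monomial_le _ _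
        have h3 := hdeg j
        omega
  have hfin : Module.Finite (MvPolynomial (Fin (m + 1)) ℂ) (MvPolynomial (Fin (n + 1)) ℂ ⧸ I) := by
    rw [Module.finite_def, Submodule.fg_def]
    refine ⟨G, hGfin, top_unique fun a _ => ?_⟩
    obtain ⟨p, rfl⟩ := Ideal.Quotient.mk_surjective a
    exact hspan p.totalDegree p le_rfl
  -- Step 6: lying over
  haveI := hfin
  haveI : Algebra.IsIntegral (MvPolynomial (Fin (m + 1)) ℂ) (MvPolynomial (Fin (n + 1)) ℂ ⧸ I) :=
    Algebra.IsIntegral.of_finite (R := MvPolynomial (Fin (m + 1)) ℂ) (B := (MvPolynomial (Fin (n + 1)) ℂ ⧸ I))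
  set mz : Ideal (MvPolynomial (Fin (m + 1)) ℂ) := MvPolynomial.vanishingIdeal ℂ {z} with hmz
  haveI : mz.IsMaximal := inferInstance
  have hcomap : (⊥ : Ideal (MvPolynomial (Fin (n + 1)) ℂ ⧸ I)).comap (algebraMap (MvPolynomial (Fin (m + 1)) ℂ) (MvPolynomial (Fin (n + 1)) ℂ ⧸ I)) ≤ mz := by
    intro g hg
    rw [Ideal.mem_comap, Ideal.mem_bot, hψ, Ideal.Quotient.eq_zero_iff_mem] at hg
    rw [hmz, MvPolynomial.mem_vanishingIdeal_singleton_iff]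
    exact hker g hg
  obtain ⟨P, -, hPprime, hPcomap⟩ := Ideal.exists_ideal_over_prime_of_isIntegral mz ⊥ hcomap
  haveI := hPprime
  haveI hPmax : P.IsMaximal := by
    apply Ideal.isMaximal_of_isIntegral_of_isMaximal_comap (R := MvPolynomial (Fin (m + 1)) ℂ) P
    rw [hPcomap]
    infer_instance
  set M : Ideal (MvPolynomial (Fin (n + 1)) ℂ) := P.comap (Ideal.Quotient.mk I) with hMdef
  haveI : M.IsMaximal := Ideal.comap_isMaximal_of_surjective _ Ideal.Quotient.mk_surjective
  obtain ⟨w, hw⟩ := (MvPolynomial.isMaximal_iff_eq_vanishingIdeal_singleton (I := M)).1 inferInstance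
  refine ⟨w, ?_, ?_⟩
  · intro p hp
    have hpM : p ∈ M := by
      show Ideal.Quotient.mk I p ∈ P
      rw [Ideal.Quotient.eq_zero_iff_mem.2 hp]
      exact P.zero_mem
    rw [hw, MvPolynomial.mem_vanishingIdeal_singleton_iff] at hpM
    exact hpM
  · intro j
    have h1 : (X j - C (z j) : MvPolynomial (Fin (m + 1)) ℂ) ∈ mz := by
      rw [hmz, MvPolynomial.mem_vanishingIdeal_singleton_iff]
      simp
    rw [← hPcomap, Ideal.mem_comap] at h1
    have h2 : (ℓ j - C (z j)) ∈ M := by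
      show Ideal.Quotient.mk I (ℓ j - C (z j)) ∈ P
      have heval : algebraMap (MvPolynomial (Fin (m + 1)) ℂ) (MvPolynomial (Fin (n + 1)) ℂ ⧸ I) (X j - C (z j))
          = Ideal.Quotient.mk I (ℓ j - C (z j)) := by
        rw [hψ]
        congr 1
        rw [map_sub, aeval_X, aeval_C]
        rfl
      rw [← heval]
      exact h1
    rw [hw, MvPolynomial.mem_vanishingIdeal_singleton_iff, map_sub, aeval_C, sub_eq_zero] at h2
    exact h2

end ElimAux

/-- `V ⊆ ℂ^{m+1}` is the cone of a complex projective variety: the common zero locus of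
a family of complex homogeneous polynomials. -/
def ComplexHomVar (m : ℕ) (V : Set (Fin (m + 1) → ℂ)) : Prop :=
  ∃ Q : Set (MvPolynomial (Fin (m + 1)) ℂ),
    (∀ q ∈ Q, ∃ d, q.IsHomogeneous d) ∧
    V = {z | ∀ q ∈ Q, MvPolynomial.eval z q = 0}

/-- The cone of the smallest complex projective variety containing a real set `S`. -/
def ZIc (m : ℕ) (S : Set (Fin (m + 1) → ℝ)) : Set (Fin (m + 1) → ℂ) :=
  {z | ∀ f : MvPolynomial (Fin (m + 1)) ℂ, (∃ d, f.IsHomogeneous d) →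
    (∀ x ∈ S, MvPolynomial.eval (fun i => (x i : ℂ)) f = 0) →
    MvPolynomial.eval z f = 0}

/-- Lemma 6.9: let `π` be a linear projection with real coefficients whose center `L`
(the common kernel) meets the cone `V` only at `0`. If the irreducible complex projective
variety `V` is the complexification of its real points, then `π(V)` is the
complexification of its real points: `ZI(Re(π(V))) = π(V)`. -/
theorem projection_preserves_complexification (n m : ℕ)
    (A : Matrix (Fin (m + 1)) (Fin (n + 1)) ℝ)
    (π : (Fin (n + 1) → ℂ) → (Fin (m + 1) → ℂ))
    (hπ : π = fun z j => ∑ i, (A j i : ℂ) * z i)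
    (V : Set (Fin (n + 1) → ℂ)) (hV : ComplexHomVar n V)
    (hL : ∀ z ∈ V, π z = 0 → z = 0)
    (hVreal : V = ZIc n {x : Fin (n + 1) → ℝ | (fun i => (x i : ℂ)) ∈ V}) :
    π '' V = ZIc m {y : Fin (m + 1) → ℝ | (fun j => (y j : ℂ)) ∈ π '' V} := by
  classical
  obtain ⟨Q, hQhom, hQV⟩ := hV
  set ℓ : Fin (m + 1) → MvPolynomial (Fin (n + 1)) ℂ :=
    fun j => ∑ i, C ((A j i : ℂ)) * X i with hℓdef
  have hℓ1 : ∀ j, (ℓ j).IsHomogeneous 1 := by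
    intro j
    exact MvPolynomial.IsHomogeneous.sum _ _ _ fun i _ => isHomogeneous_C_mul_X _ _
  have hVzero : V = MvPolynomial.zeroLocus ℂ (Ideal.span Q) := by
    rw [hQV]; exact (MvPolynomial.zeroLocus_span Q).symm
  have hevalℓ : ∀ (w : Fin (n + 1) → ℂ) (j : Fin (m + 1)), eval w (ℓ j) = π w j := by
    intro w j
    rw [hπ, hℓdef]
    simp
  have hcomp : ∀ (w : Fin (n + 1) → ℂ) (f : MvPolynomial (Fin (m + 1)) ℂ),
      eval w (aeval ℓ f) = eval (π w) f := by
    intro w f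
    rw [eval_aeval']
    have harg : (fun j => eval w (ℓ j)) = π w := funext (hevalℓ w)
    rw [harg]
  apply Set.Subset.antisymm
  · rintro y ⟨w, hwV, rfl⟩
    intro f hfhom hfvan
    obtain ⟨d, hfd⟩ := hfhom
    have hwZ : w ∈ ZIc n {x : Fin (n + 1) → ℝ | (fun i => (x i : ℂ)) ∈ V} := by
      rw [← hVreal]; exact hwV
    have h0 : eval w (aeval ℓ f) = 0 := by
      apply hwZ (aeval ℓ f) ⟨d, by simpa using hfd.aeval ℓ hℓ1⟩
      intro x hx
      rw [hcomp]
      have hy : π (fun i => (x i : ℂ)) = fun j => ((∑ i, A j i * x i : ℝ) : ℂ) := by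
        rw [hπ]
        funext j
        push_cast
        rfl
      rw [hy]
      exact hfvan (fun j => ∑ i, A j i * x i) ⟨(fun i => (x i : ℂ)), hx, hy⟩
    rwa [hcomp] at h0
  · intro z hz
    have hL' : ∀ w ∈ MvPolynomial.zeroLocus ℂ (Ideal.span Q),
        (∀ j, eval w (ℓ j) = 0) → w = 0 := by
      intro w hw hwl
      apply hL w (by rw [hVzero]; exact hw)
      funext j
      show π w j = 0
      rw [← hevalℓ w j]
      exact hwl j
    have hker : ∀ g : MvPolynomial (Fin (m + 1)) ℂ,
        aeval ℓ g ∈ Ideal.span Q → eval z g = 0 := by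
      intro g hg
      have hcompd : ∀ d, eval z (homogeneousComponent d g) = 0 := by
        intro d
        apply hz _ ⟨d, homogeneousComponent_isHomogeneous d g⟩
        intro y hy
        obtain ⟨w, hwV, hwy⟩ := hy
        have hmem : aeval ℓ (homogeneousComponent d g) ∈ Ideal.span Q := by
          rw [← aeval_homogeneousComponent_comm ℓ hℓ1 g d]
          exact homogeneousComponent_mem_span Q hQhom _ hg d
        have hwz : w ∈ MvPolynomial.zeroLocus ℂ (Ideal.span Q) := by
          rw [← hVzero]; exact hwV
        have heq : eval (fun j => (y j : ℂ)) (homogeneousComponent d g)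
            = eval w (aeval ℓ (homogeneousComponent d g)) := by
          rw [hcomp, hwy]
        rw [heq]
        exact hwz _ hmem
      calc eval z g
          = eval z (∑ i ∈ Finset.range (g.totalDegree + 1), homogeneousComponent i g) := by
            rw [sum_homogeneousComponent]
        _ = 0 := by
            rw [map_sum]
            exact Finset.sum_eq_zero fun d _ => hcompd d
    obtain ⟨w, hw0, hwl⟩ := elimination_key Q hQhom ℓ hℓ1 hL' z hker
    refine ⟨w, by rw [hVzero]; exact hw0, ?_⟩
    funext j
    rw [← hevalℓ w j]
    exact hwl j
end
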